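/- Let P̃(2) be the right prism of height 2 over an equilateral triangle with side length 2 (vertices A=(0,0,h), B=(2,0,h), C=(1,√3,h) for h ∈ {0,2}). Then the vertex set of P̃(2) is homogeneous but not 2-point homogeneous: d((0,0,0),(2,0,0)) = d((0,0,0),(0,0,2)) = 2, yet no isometry of the vertex set maps the pair ((0,0,0),(2,0,0)) to the pair ((0,0,0),(0,0,2)). -/

import Mathlib

/-- A point of `ℝ³` with the Euclidean (`L²`) metric, given by three coordinates. -/
noncomputable def pt (x y z : ℝ) : EuclideanSpace ℝ (Fin 3) :=
  (WithLp.equiv 2 (Fin 3 → ℝ)).symm ![x, y, z]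

/-- The 6 vertices of the right prism of height 2 over an equilateral triangle with
side length 2. -/
noncomputable def triPrismVerts : Set (EuclideanSpace ℝ (Fin 3)) :=
  {pt 0 0 0, pt 2 0 0, pt 1 (Real.sqrt 3) 0, pt 0 0 2, pt 2 0 2, pt 1 (Real.sqrt 3) 2}

/-!
Index the vertices by `Fin 3 × Fin 2` (vertex of the triangle, base). The squared distance
between two vertices is `4` times the number of coordinates in which their indices differ, so
every permutation of the triangle vertices combined with a permutation of the bases is an
isometry, and these act transitively. On the other hand, `(0,0,0)` and `(2,0,0)` have the common
neighbour `(1,√3,0)` at distance `2`, while `(0,0,0)` and `(0,0,2)` have none; an isometry would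
carry the common neighbour of the former pair to one of the latter.
-/

noncomputable def prismVertex : Fin 3 × Fin 2 → EuclideanSpace ℝ (Fin 3)
  | (i, j) => ![![pt 0 0 0, pt 0 0 2], ![pt 2 0 0, pt 2 0 2],
      ![pt 1 (Real.sqrt 3) 0, pt 1 (Real.sqrt 3) 2]] i j

def prismSqDist (a b : Fin 3 × Fin 2) : ℕ :=
  4 * ((if a.1 = b.1 then 0 else 1) + (if a.2 = b.2 then 0 else 1))

theorem dist_prismVertex_sq (a b : Fin 3 × Fin 2) :
    dist (prismVertex a) (prismVertex b) ^ 2 = prismSqDist a b := by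
  obtain ⟨i, j⟩ := a
  obtain ⟨k, l⟩ := b
  fin_cases i <;> fin_cases j <;> fin_cases k <;> fin_cases l <;>
    simp [EuclideanSpace.dist_eq, prismVertex, prismSqDist, pt, Fin.sum_univ_three, Real.dist_eq,
      sq_abs] <;>
    norm_num

theorem dist_prismVertex_eq_dist_iff {a b c d : Fin 3 × Fin 2} :
    dist (prismVertex a) (prismVertex b) = dist (prismVertex c) (prismVertex d) ↔
      prismSqDist a b = prismSqDist c d := by
  rw [← pow_left_inj₀ dist_nonneg dist_nonneg two_ne_zero, dist_prismVertex_sq,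
    dist_prismVertex_sq, Nat.cast_inj]

theorem dist_prismVertex_eq_two_iff {a b : Fin 3 × Fin 2} :
    dist (prismVertex a) (prismVertex b) = 2 ↔ prismSqDist a b = 4 := by
  rw [← pow_left_inj₀ dist_nonneg zero_le_two two_ne_zero, dist_prismVertex_sq]
  norm_cast

theorem prismSqDist_prodCongr (σ : Equiv.Perm (Fin 3)) (τ : Equiv.Perm (Fin 2))
    (a b : Fin 3 × Fin 2) :
    prismSqDist (σ.prodCongr τ a) (σ.prodCongr τ b) = prismSqDist a b := by
  simp [prismSqDist]

theorem prismVertex_injective : Function.Injective prismVertex := by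
  intro a b h
  have : prismSqDist a b = prismSqDist b b := by
    rw [← dist_prismVertex_eq_dist_iff, h]
  simp only [prismSqDist] at this
  grind

theorem range_prismVertex : Set.range prismVertex = triPrismVerts := by
  ext x
  simp [triPrismVerts, prismVertex, Prod.exists, Fin.exists_fin_succ]
  tauto

noncomputable def prismVertexEquiv : Fin 3 × Fin 2 ≃ triPrismVerts :=
  (Equiv.ofInjective prismVertex prismVertex_injective).trans (Equiv.setCongr range_prismVertex)

def IsometryEquiv.ofPermOfDistEq {ι X : Type*} [PseudoMetricSpace X] (f : ι ≃ X)
    (π : Equiv.Perm ι) (h : ∀ a b, dist (f (π a)) (f (π b)) = dist (f a) (f b)) : X ≃ᵢ X where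
  toEquiv := (f.symm.trans π).trans f
  isometry_toFun := Isometry.of_dist_eq fun x y => by simpa using h (f.symm x) (f.symm y)

theorem not_exists_isometryEquiv_of_apex {X : Type*} [PseudoMetricSpace X] {p q r p' q' : X}
    {d : ℝ} (hp : dist r p = d) (hq : dist r q = d) (h' : ∀ s, dist s p' = d → dist s q' ≠ d) :
    ¬ ∃ e : X ≃ᵢ X, e p = p' ∧ e q = q' := by
  rintro ⟨e, rfl, rfl⟩
  exact h' (e r) (by rwa [e.dist_eq]) (by rwa [e.dist_eq])

theorem triPrismVerts_exists_isometryEquiv_apply_eq (p q : triPrismVerts) :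
    ∃ e : triPrismVerts ≃ᵢ triPrismVerts, e p = q := by
  obtain ⟨a, rfl⟩ := prismVertexEquiv.surjective p
  obtain ⟨b, rfl⟩ := prismVertexEquiv.surjective q
  let π := (Equiv.swap a.1 b.1).prodCongr (Equiv.swap a.2 b.2)
  refine ⟨.ofPermOfDistEq prismVertexEquiv π fun x y => ?_, ?_⟩
  · exact dist_prismVertex_eq_dist_iff.2 (prismSqDist_prodCongr _ _ x y)
  · simp [IsometryEquiv.ofPermOfDistEq, π, Prod.map]

theorem triPrismVerts_not_exists_isometryEquiv_base_edge_to_lateral_edge :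
    ¬ ∃ e : triPrismVerts ≃ᵢ triPrismVerts,
      e (prismVertexEquiv (0, 0)) = prismVertexEquiv (0, 0) ∧
        e (prismVertexEquiv (1, 0)) = prismVertexEquiv (0, 1) := by
  refine not_exists_isometryEquiv_of_apex (r := prismVertexEquiv (2, 0)) (d := 2)
    ((dist_prismVertex_eq_two_iff (a := (2, 0)) (b := (0, 0))).2 rfl)
    ((dist_prismVertex_eq_two_iff (a := (2, 0)) (b := (1, 0))).2 rfl) fun s hp hq => ?_
  obtain ⟨c, rfl⟩ := prismVertexEquiv.surjective s
  have no_common_neighbour :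
      ∀ c : Fin 3 × Fin 2, prismSqDist c (0, 0) = 4 → prismSqDist c (0, 1) ≠ 4 := by
    decide
  exact no_common_neighbour c ((dist_prismVertex_eq_two_iff (a := c) (b := (0, 0))).1 hp)
    ((dist_prismVertex_eq_two_iff (a := c) (b := (0, 1))).1 hq)

/-- the vertex set of the prism `P̃(2)` is homogeneous, the distances
`d((0,0,0),(2,0,0))` and `d((0,0,0),(0,0,2))` both equal `2`, but no isometry of the
vertex set maps the pair `((0,0,0),(2,0,0))` to the pair `((0,0,0),(0,0,2))`. -/
theorem stmt_16 :
    (∀ p q : ↥triPrismVerts, ∃ e : ↥triPrismVerts ≃ᵢ ↥triPrismVerts, e p = q) ∧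
    dist (pt 0 0 0) (pt 2 0 0) = 2 ∧
    dist (pt 0 0 0) (pt 0 0 2) = 2 ∧
    ¬ ∃ e : ↥triPrismVerts ≃ᵢ ↥triPrismVerts,
        e ⟨pt 0 0 0, by simp [triPrismVerts]⟩ = ⟨pt 0 0 0, by simp [triPrismVerts]⟩ ∧
        e ⟨pt 2 0 0, by simp [triPrismVerts]⟩ = ⟨pt 0 0 2, by simp [triPrismVerts]⟩ :=
  ⟨triPrismVerts_exists_isometryEquiv_apply_eq,
    (dist_prismVertex_eq_two_iff (a := (0, 0)) (b := (1, 0))).2 rfl,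
    (dist_prismVertex_eq_two_iff (a := (0, 0)) (b := (0, 1))).2 rfl,
    triPrismVerts_not_exists_isometryEquiv_base_edge_to_lateral_edge⟩
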